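/- For all m, n, k, l ∈ ℕ and ρ > 0, ∫_{ℝ²} J_{m,n}(x+iy, ρ) · conj(J_{k,l}(x+iy, ρ)) dμ(x,y) = m! · n! · ρ^{m+n} if (m,n) = (k,l), and = 0 otherwise. -/

import Mathlib

open MeasureTheory Complex Finset

noncomputable section

/-- Hermite–Laguerre–Ito polynomial. -/
def HLI (m n : ℕ) (z : ℂ) (ρ : ℝ) : ℂ :=
  ∑ r ∈ Finset.range (min m n + 1),
    (-1 : ℂ) ^ r * (r.factorial : ℂ) * (m.choose r : ℂ) * (n.choose r : ℂ) *
      z ^ (m - r) * (starRingEnd ℂ z) ^ (n - r) * (ρ : ℂ) ^ r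

/-- Gaussian probability measure on ℝ² with density (πρ)⁻¹ exp(−(x²+y²)/ρ). -/
def gmeas (ρ : ℝ) : Measure (ℝ × ℝ) :=
  volume.withDensity fun p =>
    ENNReal.ofReal ((Real.pi * ρ)⁻¹ * Real.exp (-(p.1 ^ 2 + p.2 ^ 2) / ρ))

open Real Set Polynomial

/-- The functional L(X^j) = j!. -/
def Lf : ℂ[X] →ₗ[ℂ] ℂ :=
  Polynomial.lsum (fun j => (j.factorial : ℂ) • LinearMap.id)

lemma Lf_monomial (j : ℕ) (c : ℂ) : Lf (monomial j c) = c * j.factorial := by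
  simp [Lf, Polynomial.lsum_apply, Polynomial.sum_monomial_index, mul_comm]

lemma Lf_CXpow (j : ℕ) (c : ℂ) : Lf (C c * X ^ j) = c * j.factorial := by
  rw [C_mul_X_pow_eq_monomial, Lf_monomial]

lemma Lf_Xpow (j : ℕ) : Lf (X ^ j : ℂ[X]) = j.factorial := by
  simpa using Lf_CXpow j 1

lemma Lf_one : Lf (1 : ℂ[X]) = 1 := by simpa using Lf_Xpow 0

lemma Lf_derivative (p : ℂ[X]) : Lf (derivative p) = Lf p - p.eval 0 := by
  induction p using Polynomial.induction_on' with
  | add p q hp hq =>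
    rw [derivative_add, map_add, map_add, hp, hq, eval_add]; ring
  | monomial j c =>
    rw [derivative_monomial, Lf_monomial, Lf_monomial, eval_monomial]
    cases j with
    | zero => simp
    | succ i => simp [Nat.factorial_succ]; ring

/-- adjunction -/
lemma Lf_adj (p q : ℂ[X]) :
    Lf ((p - derivative p) * q) = p.eval 0 * q.eval 0 + Lf (p * derivative q) := by
  have h1 : derivative p * q = derivative (p * q) - p * derivative q := by
    rw [derivative_mul]; ring
  rw [sub_mul, map_sub, h1, map_sub, Lf_derivative, eval_mul]
  ring

/-- iterated (I - D) applied to X^m -/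
def Aa (m n : ℕ) : ℂ[X] := (fun p => p - derivative p)^[n] (X ^ m)

lemma Aa_zero (m : ℕ) : Aa m 0 = X ^ m := rfl

lemma Aa_succ (m n : ℕ) : Aa m (n + 1) = Aa m n - derivative (Aa m n) := by
  rw [Aa, Function.iterate_succ_apply']; rfl

lemma Aa_zero_left (n : ℕ) : Aa 0 n = 1 := by
  induction n with
  | zero => simp [Aa_zero]
  | succ n ih => rw [Aa_succ, ih]; simp

lemma derivative_Aa (m n : ℕ) : derivative (Aa m n) = (m : ℂ) • Aa (m - 1) n := by
  cases m with
  | zero => simp [Aa_zero_left]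
  | succ m =>
    induction n with
    | zero =>
      simp only [Aa_zero, derivative_X_pow, smul_eq_C_mul]
    | succ n ih =>
      rw [Aa_succ, derivative_sub, ih, Aa_succ, derivative_smul, smul_sub]

lemma Xpow_dvd_Aa (m n : ℕ) (h : n < m) : X ^ (m - n) ∣ Aa m n := by
  induction n with
  | zero => simp [Aa_zero]
  | succ n ih =>
    obtain ⟨q, hq⟩ := ih (by omega)
    refine ⟨X * q - C ((m - n : ℕ) : ℂ) * q - X * derivative q, ?_⟩
    have h2 : m - n = (m - (n + 1)) + 1 := by omega
    rw [Aa_succ, hq, derivative_mul, derivative_X_pow, h2]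
    simp only [Nat.add_sub_cancel]
    ring

lemma eval_zero_Aa (m n : ℕ) (h : n < m) : (Aa m n).eval 0 = 0 := by
  obtain ⟨q, hq⟩ := Xpow_dvd_Aa m n h
  rw [hq, eval_mul, eval_pow, eval_X, zero_pow (by omega), zero_mul]

lemma key0 (m : ℕ) : ∀ l k : ℕ, m + l = k →
    Lf (X ^ m * Aa l k) = if m = k then (m.factorial : ℂ) else 0 := by
  induction m with
  | zero =>
    intro l k hbal
    simp only [Nat.zero_add] at hbal
    subst hbal
    cases l with
    | zero => simp [Aa_zero, Lf_Xpow, Lf_one]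
    | succ l' =>
      rw [pow_zero, one_mul, Aa_succ, map_sub, Lf_derivative]
      rw [eval_zero_Aa _ _ (by omega)]
      simp [Nat.succ_ne_zero]
  | succ m' ih =>
    intro l k hbal
    obtain ⟨k', rfl⟩ : ∃ k', k = k' + 1 := ⟨k - 1, by omega⟩
    rw [mul_comm, Aa_succ, Lf_adj]
    rw [eval_pow, eval_X, zero_pow (Nat.succ_ne_zero m'), mul_zero, zero_add]
    rw [derivative_X_pow, Nat.add_sub_cancel]
    have h3 : Aa l k' * (C (((m' + 1 : ℕ) : ℂ)) * X ^ m') =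
        ((m' + 1 : ℕ) : ℂ) • (X ^ m' * Aa l k') := by
      rw [smul_eq_C_mul]; ring
    push_cast at h3 ⊢
    rw [h3, _root_.map_smul, ih l k' (by omega), smul_eq_mul]
    by_cases h : m' = k'
    · subst h
      rw [if_pos rfl, if_pos rfl, Nat.factorial_succ]
      push_cast; ring
    · rw [if_neg h, if_neg (by omega), mul_zero]

lemma key (n : ℕ) : ∀ m k l : ℕ, m + l = n + k → n ≤ m →
    Lf (Aa m n * Aa l k) = if m = k then ((m.factorial : ℂ) * n.factorial) else 0 := by
  induction n with
  | zero =>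
    intro m k l hbal _
    rw [Aa_zero, key0 m l k (by omega)]
    simp
  | succ n ih =>
    intro m k l hbal hnm
    rw [Aa_succ, Lf_adj, eval_zero_Aa m n (by omega), zero_mul, zero_add, derivative_Aa]
    cases l with
    | zero =>
      simp only [Nat.cast_zero, zero_smul, mul_zero, map_zero]
      rw [if_neg (by omega)]
    | succ l' =>
      have h4 : Aa m n * (((l' + 1 : ℕ) : ℂ) • Aa (l' + 1 - 1) k) =
          ((l' + 1 : ℕ) : ℂ) • (Aa m n * Aa l' k) := by
        rw [Nat.add_sub_cancel, smul_eq_C_mul, smul_eq_C_mul]; ring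
      rw [h4, _root_.map_smul, ih m k l' (by omega) (by omega), smul_eq_mul]
      by_cases h : m = k
      · subst h
        have : l' + 1 = n + 1 := by omega
        rw [if_pos rfl, if_pos rfl, this, Nat.factorial_succ]
        push_cast; ring
      · rw [if_neg h, if_neg h, mul_zero]

/-- coefficients -/
def cc (m n r : ℕ) : ℂ :=
  (-1 : ℂ) ^ r * (r.factorial : ℂ) * (m.choose r : ℂ) * (n.choose r : ℂ)

lemma cc_comm (m n r : ℕ) : cc m n r = cc n m r := by simp [cc]; ring

lemma cc_zero (m n : ℕ) : cc m n 0 = 1 := by simp [cc]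

lemma cc_eq_zero_left (m n r : ℕ) (h : m < r) : cc m n r = 0 := by
  simp [cc, Nat.choose_eq_zero_of_lt h]

lemma cc_eq_zero_right (m n r : ℕ) (h : n < r) : cc m n r = 0 := by
  simp [cc, Nat.choose_eq_zero_of_lt h]

lemma cc_rec (m n r : ℕ) :
    cc m (n + 1) (r + 1) = cc m n (r + 1) - ((m - r : ℕ) : ℂ) * cc m n r := by
  have hnat : (r + 1).factorial * m.choose (r + 1) =
      r.factorial * (m.choose r * (m - r)) := by
    rw [Nat.factorial_succ, mul_assoc, mul_comm (r+1) _, mul_assoc,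
      Nat.choose_succ_right_eq]
  have h1 : ((r + 1).factorial : ℂ) * (m.choose (r + 1) : ℂ) =
      (r.factorial : ℂ) * ((m.choose r : ℂ) * ((m - r : ℕ) : ℂ)) := by
    exact_mod_cast hnat
  simp only [cc, Nat.choose_succ_succ]
  push_cast
  linear_combination (-(-1 : ℂ) ^ r * (n.choose r : ℂ)) * h1

lemma Aexp (m n : ℕ) : Aa m n = ∑ r ∈ range (n + 1), C (cc m n r) * X ^ (m - r) := by
  induction n with
  | zero => simp [Aa_zero, cc_zero]
  | succ n ih =>
    rw [Aa_succ, ih, derivative_sum]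
    have hD : ∀ r ∈ range (n + 1), derivative (C (cc m n r) * X ^ (m - r)) =
        C (cc m n r * ((m - r : ℕ) : ℂ)) * X ^ (m - (r + 1)) := by
      intro r _
      rw [derivative_C_mul, derivative_X_pow, C_mul, Nat.sub_sub]
      ring
    rw [Finset.sum_congr rfl hD]
    rw [Finset.sum_range_succ' (fun r => C (cc m (n+1) r) * X ^ (m - r)) (n + 1)]
    rw [Finset.sum_range_succ' (fun r => C (cc m n r) * X ^ (m - r)) n]
    have hz : cc m n (n + 1) = 0 := by simp [cc, Nat.choose_succ_self]
    have hext : ∑ i ∈ range n, C (cc m n (i + 1)) * X ^ (m - (i + 1)) =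
        ∑ i ∈ range (n + 1), C (cc m n (i + 1)) * X ^ (m - (i + 1)) := by
      rw [Finset.sum_range_succ, hz]; simp
    rw [hext, cc_zero, cc_zero]
    have hmain : ∑ r ∈ range (n + 1), (C (cc m n (r + 1)) * X ^ (m - (r + 1)) -
        C (cc m n r * ((m - r : ℕ) : ℂ)) * X ^ (m - (r + 1))) =
        ∑ r ∈ range (n + 1), C (cc m (n + 1) (r + 1)) * X ^ (m - (r + 1)) := by
      refine Finset.sum_congr rfl fun r _ => ?_
      rw [cc_rec]
      simp only [map_sub, map_mul]
      ring
    rw [Finset.sum_sub_distrib] at hmain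
    linear_combination hmain
  
lemma Lf_AaAa (m n k l : ℕ) :
    Lf (Aa m n * Aa l k) = ∑ r ∈ range (n + 1), ∑ s ∈ range (k + 1),
      cc m n r * cc k l s * (((m - r) + (l - s)).factorial : ℂ) := by
  rw [Aexp m n, Aexp l k, Finset.sum_mul_sum, map_sum]
  refine Finset.sum_congr rfl fun r _ => ?_
  rw [map_sum]
  refine Finset.sum_congr rfl fun s _ => ?_
  have : (C (cc m n r) * X ^ (m - r)) * (C (cc l k s) * X ^ (l - s)) =
      C (cc m n r * cc l k s) * X ^ ((m - r) + (l - s)) := by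
    rw [C_mul, pow_add]; ring
  rw [this, Lf_CXpow, cc_comm l k]

lemma shrink (m n k l : ℕ) :
    (∑ r ∈ range (n + 1), ∑ s ∈ range (k + 1),
      cc m n r * cc k l s * (((m - r) + (l - s)).factorial : ℂ)) =
    ∑ r ∈ range (min m n + 1), ∑ s ∈ range (min k l + 1),
      cc m n r * cc k l s * (((m - r) + (l - s)).factorial : ℂ) := by
  rw [← Finset.sum_subset (Finset.range_subset_range.mpr (by omega : min m n + 1 ≤ n + 1))]
  · refine Finset.sum_congr rfl fun r _ => ?_
    rw [← Finset.sum_subset (Finset.range_subset_range.mpr (by omega : min k l + 1 ≤ k + 1))]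
    intro s hs1 hs
    simp only [Finset.mem_range] at hs1 hs
    rw [cc_eq_zero_right k l s (by omega)]
    ring
  · intro r hr1 hr
    simp only [Finset.mem_range] at hr1 hr
    refine Finset.sum_eq_zero fun s _ => ?_
    rw [cc_eq_zero_left m n r (by omega)]
    ring

lemma sumId_le (m n k l : ℕ) (hbal : m + l = n + k) (hnm : n ≤ m) :
    (∑ r ∈ range (min m n + 1), ∑ s ∈ range (min k l + 1),
      cc m n r * cc k l s * (((m - r) + (l - s)).factorial : ℂ)) =
    if (m, n) = (k, l) then ((m.factorial : ℂ) * n.factorial) else 0 := by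
  rw [← shrink, ← Lf_AaAa, key n m k l hbal hnm]
  refine if_congr ?_ rfl rfl
  constructor
  · intro h; rw [Prod.ext_iff]; constructor <;> omega
  · intro h; rw [Prod.ext_iff] at h; exact h.1

lemma sumId (m n k l : ℕ) (hbal : m + l = n + k) :
    (∑ r ∈ range (min m n + 1), ∑ s ∈ range (min k l + 1),
      cc m n r * cc k l s * (((m - r) + (l - s)).factorial : ℂ)) =
    if (m, n) = (k, l) then ((m.factorial : ℂ) * n.factorial) else 0 := by
  rcases le_or_gt n m with h | h
  · exact sumId_le m n k l hbal h
  · have h2 : (∑ r ∈ range (min m n + 1), ∑ s ∈ range (min k l + 1),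
        cc m n r * cc k l s * (((m - r) + (l - s)).factorial : ℂ)) =
        ∑ r ∈ range (min n m + 1), ∑ s ∈ range (min l k + 1),
          cc n m r * cc l k s * (((n - r) + (k - s)).factorial : ℂ) := by
      rw [min_comm n m, min_comm l k]
      refine Finset.sum_congr rfl fun r hr => Finset.sum_congr rfl fun s hs => ?_
      simp only [Finset.mem_range] at hr hs
      rw [cc_comm n m, cc_comm l k]
      have harg : m - r + (l - s) = n - r + (k - s) := by omega
      rw [harg]
    rw [h2, sumId_le n m l k (by omega) (by omega)]
    by_cases hc : (m, n) = (k, l)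
    · rw [Prod.ext_iff] at hc
      rw [if_pos (by rw [Prod.ext_iff]; exact ⟨hc.2, hc.1⟩), if_pos (by rw [Prod.ext_iff]; exact hc)]
      ring
    · rw [if_neg ?_, if_neg hc]
      intro hcon
      rw [Prod.ext_iff] at hcon
      exact hc (by rw [Prod.ext_iff]; exact ⟨hcon.2, hcon.1⟩)

def wden (ρ : ℝ) (p : ℝ × ℝ) : ℝ := (Real.pi * ρ)⁻¹ * Real.exp (-(p.1 ^ 2 + p.2 ^ 2) / ρ)

lemma moment (ρ : ℝ) (hρ : 0 < ρ) (a b : ℕ) :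
    ∫ p : ℝ × ℝ, wden ρ p • (((p.1 : ℂ) + p.2 * Complex.I) ^ a *
        (starRingEnd ℂ ((p.1 : ℂ) + p.2 * Complex.I)) ^ b) =
    if a = b then ((a.factorial : ℂ) * (ρ : ℂ) ^ a) else 0 := by
  set c : ℂ := (a : ℂ) - (b : ℂ) with hc
  set F : ℝ × ℝ → ℂ := fun p => wden ρ p • (((p.1 : ℂ) + p.2 * Complex.I) ^ a *
        (starRingEnd ℂ ((p.1 : ℂ) + p.2 * Complex.I)) ^ b) with hF
  rw [← integral_comp_polarCoord_symm F, polarCoord_target]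
  have hpt : ∀ p ∈ Ioi (0:ℝ) ×ˢ Ioo (-Real.pi) Real.pi,
      p.1 • F (polarCoord.symm p) =
      (((Real.pi * ρ)⁻¹ * Real.exp (-(p.1^2)/ρ) * p.1 ^ (a+b+1) : ℝ) : ℂ) *
        Complex.exp (c * p.2 * Complex.I) := by
    rintro ⟨r, θ⟩ -
    simp only [polarCoord_symm_apply, hF, wden]
    have hsq : (r * Real.cos θ)^2 + (r * Real.sin θ)^2 = r^2 := by
      have := Real.sin_sq_add_cos_sq θ; nlinarith
    rw [hsq]
    have hz : ((r * Real.cos θ : ℝ) : ℂ) + ((r * Real.sin θ : ℝ) : ℂ) * Complex.I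
        = (r : ℂ) * Complex.exp (θ * Complex.I) := by
      rw [Complex.exp_mul_I]; push_cast; ring
    have hzc : (starRingEnd ℂ) (((r * Real.cos θ : ℝ) : ℂ) + ((r * Real.sin θ : ℝ) : ℂ) * Complex.I)
        = (r : ℂ) * Complex.exp (-(θ * Complex.I)) := by
      rw [hz, map_mul, Complex.conj_ofReal, ← Complex.exp_conj]
      congr 1
      simp [Complex.conj_I, Complex.ext_iff]
    rw [hzc, hz]
    have hee : Complex.exp (θ * Complex.I) ^ a * Complex.exp (-(θ * Complex.I)) ^ b
        = Complex.exp (c * θ * Complex.I) := by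
      rw [← Complex.exp_nat_mul, ← Complex.exp_nat_mul, ← Complex.exp_add, hc]
      ring_nf
    push_cast
    rw [Complex.real_smul, Complex.real_smul]
    rw [mul_pow, mul_pow, mul_mul_mul_comm, hee]
    push_cast
    ring
  rw [setIntegral_congr_fun (measurableSet_Ioi.prod measurableSet_Ioo) hpt]
  rw [MeasureTheory.Measure.volume_eq_prod,
    setIntegral_prod_mul (fun x1 : ℝ => (((Real.pi * ρ)⁻¹ * Real.exp (-(x1^2)/ρ) * x1 ^ (a+b+1) : ℝ) : ℂ))
      (fun x2 : ℝ => Complex.exp (c * x2 * Complex.I)) (Ioi (0:ℝ)) (Ioo (-Real.pi) Real.pi)]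
  -- radial part
  have hrad : (∫ x in Ioi (0:ℝ),
      (((Real.pi * ρ)⁻¹ * Real.exp (-(x^2)/ρ) * x ^ (a+b+1) : ℝ) : ℂ)) =
      (((Real.pi * ρ)⁻¹ * ((ρ⁻¹ : ℝ) ^ (-((((a+b+1):ℕ):ℝ)+1)/2) * (1/2) *
        Real.Gamma (((((a+b+1):ℕ):ℝ)+1)/2)) : ℝ) : ℂ) := by
    have h0 := integral_ofReal (𝕜 := ℂ) (μ := volume.restrict (Ioi (0:ℝ)))
      (f := fun x => (Real.pi * ρ)⁻¹ * Real.exp (-(x^2)/ρ) * x ^ (a+b+1))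
    refine h0.trans ?_
    have hpt2 : ∀ x ∈ Ioi (0:ℝ), (Real.pi * ρ)⁻¹ * Real.exp (-(x^2)/ρ) * x ^ (a+b+1)
        = (Real.pi * ρ)⁻¹ * (x ^ ((((a+b+1) : ℕ)) : ℝ) * Real.exp (-ρ⁻¹ * x ^ (2:ℝ))) := by
      intro x hx
      rw [Real.rpow_natCast, show ((2:ℝ)) = ((2:ℕ):ℝ) by norm_num, Real.rpow_natCast]
      rw [show -ρ⁻¹ * x ^ (2:ℕ) = -(x^2)/ρ by ring]
      ring
    rw [setIntegral_congr_fun measurableSet_Ioi hpt2, integral_const_mul,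
      _root_.integral_rpow_mul_exp_neg_mul_rpow (by norm_num) (by exact neg_one_lt_zero.trans_le (Nat.cast_nonneg _)) (by positivity)]
    norm_cast
  rw [hrad]
  by_cases hab : a = b
  · subst hab
    have hc0 : c = 0 := by rw [hc]; ring
    simp only [hc0, zero_mul, Complex.exp_zero]
    rw [integral_const]
    simp only [measureReal_def, MeasurableSet.univ, Measure.restrict_apply, Set.univ_inter, Real.volume_Ioo]
    rw [if_pos trivial]
    have h2pi : (Real.pi - -Real.pi) = 2 * Real.pi := by ring
    rw [h2pi, ENNReal.toReal_ofReal (by positivity)]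
    -- now pure computation
    have hgam : Real.Gamma ((((a+a+1 : ℕ):ℝ) + 1)/2) = a.factorial := by
      rw [show ((((a+a+1 : ℕ):ℝ))+1)/2 = (a:ℝ) + 1 by push_cast; ring, Real.Gamma_nat_eq_factorial]
    rw [Complex.real_smul, mul_one, ← Complex.ofReal_mul]
    have hexp1 : (ρ⁻¹ : ℝ) ^ (-(((a+a+1 : ℕ):ℝ) + 1)/2) = ρ ^ (a+1 : ℕ) := by
      rw [show (-(((a+a+1 : ℕ):ℝ) + 1)/2) = -((a:ℝ)+1) by push_cast; ring]
      rw [Real.rpow_neg (by positivity), Real.inv_rpow hρ.le, inv_inv]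
      rw [show ((a:ℝ)+1) = ((a+1 : ℕ) : ℝ) by push_cast; ring, Real.rpow_natCast]
    rw [show ((ρ:ℂ))^a = ((ρ^a : ℝ):ℂ) by push_cast; ring]
    rw [hgam, hexp1]
    norm_cast
    have hπ : Real.pi ≠ 0 := Real.pi_ne_zero
    field_simp
    ring
  · have hcne : c * Complex.I ≠ 0 := by
      apply mul_ne_zero _ Complex.I_ne_zero
      rw [hc, sub_ne_zero]
      exact_mod_cast hab
    have hang : (∫ θ in Ioo (-Real.pi) Real.pi, Complex.exp (c * θ * Complex.I)) = 0 := by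
      rw [← MeasureTheory.integral_Ioc_eq_integral_Ioo,
        ← intervalIntegral.integral_of_le (by linarith [Real.pi_pos])]
      have : ∀ θ : ℝ, c * θ * Complex.I = (c * Complex.I) * θ := fun θ => by ring
      simp_rw [this]
      rw [integral_exp_mul_complex hcne]
      set d : ℤ := (a : ℤ) - (b : ℤ) with hd
      have hcd : c = (d : ℂ) := by rw [hc, hd]; push_cast; ring
      have hexp : Complex.exp (c * Complex.I * (Real.pi : ℝ)) =
          Complex.exp (c * Complex.I * ((-Real.pi : ℝ) : ℝ)) := by
        rw [show c * Complex.I * ((Real.pi:ℝ) : ℂ) = c * Complex.I * (((-Real.pi : ℝ)):ℂ)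
            + (d:ℂ) * (2 * (Real.pi:ℂ) * Complex.I) by rw [hcd]; push_cast; ring]
        rw [Complex.exp_add, Complex.exp_int_mul_two_pi_mul_I, mul_one]
      rw [hexp, sub_self, zero_div]
    rw [hang, mul_zero, if_neg hab]

lemma h1d (ρ : ℝ) (hρ : 0 < ρ) (j : ℕ) :
    Integrable (fun x : ℝ => |x| ^ j * Real.exp (-(x^2)/ρ)) volume := by
  have h0 : Integrable (fun x : ℝ => x ^ (j:ℝ) * Real.exp (-ρ⁻¹ * x ^ 2)) volume :=
    integrable_rpow_mul_exp_neg_mul_sq (inv_pos.mpr hρ)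
      (by exact neg_one_lt_zero.trans_le (Nat.cast_nonneg _))
  have h1 : Integrable (fun x : ℝ => x ^ j * Real.exp (-ρ⁻¹ * x ^ 2)) volume := by
    simpa [Real.rpow_natCast] using h0
  refine h1.abs.congr (Filter.Eventually.of_forall fun x => ?_)
  show |x ^ j * Real.exp (-ρ⁻¹ * x ^ 2)| = |x| ^ j * Real.exp (-(x^2)/ρ)
  rw [abs_mul, _root_.abs_pow, _root_.abs_of_pos (Real.exp_pos _),
    show -ρ⁻¹ * x^2 = -(x^2)/ρ by ring]

lemma wden_nonneg (ρ : ℝ) (hρ : 0 < ρ) (p : ℝ × ℝ) : 0 ≤ wden ρ p := by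
  have := Real.pi_pos
  unfold wden; positivity

lemma integ (ρ : ℝ) (hρ : 0 < ρ) (a b : ℕ) :
    Integrable (fun p : ℝ × ℝ => wden ρ p • (((p.1 : ℂ) + p.2 * Complex.I) ^ a *
      (starRingEnd ℂ ((p.1 : ℂ) + p.2 * Complex.I)) ^ b)) volume := by
  have hπ := Real.pi_pos
  set n := a + b with hn
  have hg : Integrable (fun p : ℝ × ℝ => ∑ j ∈ range (n+1),
      ((Real.pi*ρ)⁻¹ * (n.choose j)) * ((|p.1| ^ j * Real.exp (-(p.1^2)/ρ)) *
        (|p.2| ^ (n-j) * Real.exp (-(p.2^2)/ρ)))) volume := by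
    apply integrable_finset_sum
    intro j _
    rw [MeasureTheory.Measure.volume_eq_prod]
    exact (Integrable.mul_prod (h1d ρ hρ j) (h1d ρ hρ (n-j))).const_mul _
  refine hg.mono' ?_ (Filter.Eventually.of_forall fun p => ?_)
  · apply Continuous.aestronglyMeasurable
    refine Continuous.smul (by exact (by unfold wden; fun_prop : Continuous fun p : ℝ × ℝ => wden ρ p))
      (Continuous.mul (by fun_prop : Continuous fun p : ℝ × ℝ => ((p.1 : ℂ) + p.2 * Complex.I) ^ a)
        (Continuous.pow (Complex.continuous_conj.comp (by fun_prop : Continuous fun p : ℝ × ℝ => ((p.1 : ℂ) + p.2 * Complex.I))) b))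
  · have hzb : ‖((p.1 : ℂ) + p.2 * Complex.I)‖ ≤ |p.1| + |p.2| := by
      refine (norm_add_le _ _).trans ?_
      simp [Complex.norm_real]
    have hnorm : ‖wden ρ p • (((p.1 : ℂ) + p.2 * Complex.I) ^ a *
        (starRingEnd ℂ ((p.1 : ℂ) + p.2 * Complex.I)) ^ b)‖
        = wden ρ p * ‖((p.1 : ℂ) + p.2 * Complex.I)‖ ^ n := by
      rw [norm_smul, Real.norm_eq_abs, _root_.abs_of_nonneg (wden_nonneg ρ hρ p),
        norm_mul, norm_pow, norm_pow, RCLike.norm_conj, ← pow_add]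
    rw [hnorm]
    have hb2 : wden ρ p * ‖((p.1 : ℂ) + p.2 * Complex.I)‖ ^ n ≤
        wden ρ p * (|p.1| + |p.2|) ^ n :=
      mul_le_mul_of_nonneg_left (pow_le_pow_left₀ (norm_nonneg _) hzb n) (wden_nonneg ρ hρ p)
    refine hb2.trans (le_of_eq ?_)
    rw [add_pow]
    unfold wden
    rw [show (-(p.1^2 + p.2^2)/ρ) = (-(p.1^2)/ρ) + (-(p.2^2)/ρ) by ring, Real.exp_add,
      Finset.mul_sum]
    refine Finset.sum_congr rfl fun j _ => ?_
    ring

lemma cc_conj (m n r : ℕ) : (starRingEnd ℂ) (cc m n r) = cc m n r := by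
  simp [cc]

lemma wden_continuous (ρ : ℝ) : Continuous (wden ρ) := by
  unfold wden; fun_prop

lemma gmeas_integral (ρ : ℝ) (hρ : 0 < ρ) (f : ℝ × ℝ → ℂ) :
    ∫ p, f p ∂(gmeas ρ) = ∫ p, wden ρ p • f p := by
  have hmeas : Measurable fun p : ℝ × ℝ => (wden ρ p).toNNReal :=
    (wden_continuous ρ).measurable.real_toNNReal
  have hdef : gmeas ρ = volume.withDensity fun p => ((wden ρ p).toNNReal : ENNReal) := rfl
  rw [hdef, integral_withDensity_eq_integral_smul hmeas f]
  congr 1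
  funext p
  rw [NNReal.smul_def, Real.coe_toNNReal _ (wden_nonneg ρ hρ p)]

/-- orthogonality of the Hermite–Laguerre–Ito polynomials in L²(μ). -/
theorem stmt6 (m n k l : ℕ) (ρ : ℝ) (hρ : 0 < ρ) :
    ∫ p : ℝ × ℝ,
        HLI m n (p.1 + p.2 * Complex.I) ρ *
          starRingEnd ℂ (HLI k l (p.1 + p.2 * Complex.I) ρ) ∂(gmeas ρ) =
      if (m, n) = (k, l) then ((m.factorial : ℂ) * (n.factorial : ℂ) * (ρ : ℂ) ^ (m + n))
      else 0 := by
  rw [gmeas_integral ρ hρ]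
  have hfun : (fun p : ℝ × ℝ => wden ρ p • (HLI m n ((p.1 : ℂ) + p.2 * Complex.I) ρ *
      starRingEnd ℂ (HLI k l ((p.1 : ℂ) + p.2 * Complex.I) ρ))) =
      fun p : ℝ × ℝ => ∑ r ∈ Finset.range (min m n + 1), ∑ s ∈ Finset.range (min k l + 1),
        (cc m n r * cc k l s * (ρ : ℂ) ^ (r + s)) *
          (wden ρ p • (((p.1 : ℂ) + p.2 * Complex.I) ^ ((m - r) + (l - s)) *
            (starRingEnd ℂ ((p.1 : ℂ) + p.2 * Complex.I)) ^ ((n - r) + (k - s)))) := by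
    funext p
    set z : ℂ := (p.1 : ℂ) + p.2 * Complex.I with hzdef
    unfold HLI
    rw [map_sum, Finset.sum_mul_sum, Finset.smul_sum]
    refine Finset.sum_congr rfl fun r hr => ?_
    rw [Finset.smul_sum]
    refine Finset.sum_congr rfl fun s hs => ?_
    simp only [map_mul, map_pow, map_neg, map_one, map_natCast, Complex.conj_conj,
      Complex.conj_ofReal]
    rw [Complex.real_smul, Complex.real_smul]
    simp only [cc, pow_add]
    ring
  rw [hfun]
  rw [integral_finset_sum _ (fun r _ => integrable_finset_sum _ (fun s _ =>
    (integ ρ hρ _ _).const_mul _))]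
  have hin : ∀ r ∈ Finset.range (min m n + 1),
      (∫ p : ℝ × ℝ, ∑ s ∈ Finset.range (min k l + 1),
        (cc m n r * cc k l s * (ρ : ℂ) ^ (r + s)) *
          (wden ρ p • (((p.1 : ℂ) + p.2 * Complex.I) ^ ((m - r) + (l - s)) *
            (starRingEnd ℂ ((p.1 : ℂ) + p.2 * Complex.I)) ^ ((n - r) + (k - s))))) =
      ∑ s ∈ Finset.range (min k l + 1),
        (cc m n r * cc k l s * (ρ : ℂ) ^ (r + s)) *
          (if (m - r) + (l - s) = (n - r) + (k - s)
            then ((((m - r) + (l - s)).factorial : ℂ) * (ρ : ℂ) ^ ((m - r) + (l - s))) else 0) := by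
    intro r _
    rw [integral_finset_sum _ (fun s _ => (integ ρ hρ _ _).const_mul _)]
    refine Finset.sum_congr rfl fun s _ => ?_
    rw [MeasureTheory.integral_const_mul, moment ρ hρ]
  rw [Finset.sum_congr rfl hin]
  by_cases hbal : m + l = n + k
  · have hterm : ∀ r ∈ Finset.range (min m n + 1), ∀ s ∈ Finset.range (min k l + 1),
        (cc m n r * cc k l s * (ρ : ℂ) ^ (r + s)) *
          (if (m - r) + (l - s) = (n - r) + (k - s)
            then ((((m - r) + (l - s)).factorial : ℂ) * (ρ : ℂ) ^ ((m - r) + (l - s))) else 0) =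
        (cc m n r * cc k l s * ((((m - r) + (l - s)).factorial : ℂ))) * (ρ : ℂ) ^ (m + l) := by
      intro r hr s hs
      simp only [Finset.mem_range] at hr hs
      rw [if_pos (by omega)]
      rw [show m + l = (r + s) + ((m - r) + (l - s)) by omega, pow_add]
      ring
    rw [Finset.sum_congr rfl (fun r hr => Finset.sum_congr rfl (hterm r hr))]
    have hfact : ∑ r ∈ Finset.range (min m n + 1), ∑ s ∈ Finset.range (min k l + 1),
        cc m n r * cc k l s * ((m - r + (l - s)).factorial : ℂ) * (ρ:ℂ) ^ (m + l) =
        (∑ r ∈ Finset.range (min m n + 1), ∑ s ∈ Finset.range (min k l + 1),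
          cc m n r * cc k l s * ((m - r + (l - s)).factorial : ℂ)) * (ρ:ℂ) ^ (m + l) := by
      rw [Finset.sum_mul]
      exact Finset.sum_congr rfl fun r _ => by rw [Finset.sum_mul]
    rw [hfact, sumId m n k l hbal]
    by_cases hmn : (m, n) = (k, l)
    · obtain ⟨rfl, rfl⟩ := Prod.mk.injEq .. ▸ (by exact ⟨congrArg Prod.fst hmn, congrArg Prod.snd hmn⟩ : m = k ∧ n = l)
      rw [if_pos rfl, if_pos rfl]
    · rw [if_neg hmn, if_neg hmn, zero_mul]
  · have hterm : ∀ r ∈ Finset.range (min m n + 1), ∀ s ∈ Finset.range (min k l + 1),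
        (cc m n r * cc k l s * (ρ : ℂ) ^ (r + s)) *
          (if (m - r) + (l - s) = (n - r) + (k - s)
            then ((((m - r) + (l - s)).factorial : ℂ) * (ρ : ℂ) ^ ((m - r) + (l - s))) else 0) = 0 := by
      intro r hr s hs
      simp only [Finset.mem_range] at hr hs
      rw [if_neg (by omega), mul_zero]
    rw [Finset.sum_congr rfl (fun r hr => Finset.sum_congr rfl (hterm r hr))]
    rw [if_neg (by rintro h; obtain ⟨rfl, rfl⟩ :=
      (by exact ⟨congrArg Prod.fst h, congrArg Prod.snd h⟩ : m = k ∧ n = l); omega)]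
    simp

end
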